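/- arXiv:2502.20531 — 6 statements merged into one kernel-verified Lean document; each statement's English description precedes it below -/
import Mathlib

section
/- At any global minimum of L(σ_1,...,σ_L) = (1/2)(∏_{ℓ=1}^L σ_ℓ − σ_*)² with all σ_ℓ ≠ 0, the (i,j) entry of the Hessian of L equals σ_*²/(σ_i σ_j); consequently the largest eigenvalue of the Hessian equals ∑_{i=1}^L σ_*²/σ_i². -/
/-!
Write the loss as `½ (g - σ_*)²` with `g` the product map. Its Hessian is
`∇g ∇gᵀ + (g - σ_*) ∇²g`, and the second term vanishes on the minimum set `g = σ_*`.
There `∂ᵢ g = ∏_{k ≠ i} σ_k = σ_* / σᵢ`, so the Hessian is the rank-one matrix `w wᵀ` with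
`wᵢ = σ_* / σᵢ`, whose only eigenvalues are `0` and `w ⬝ᵥ w`.
-/

open Matrix Finset

section HalfSquaredResidual

variable {E : Type*} [NormedAddCommGroup E] [NormedSpace ℝ E] {g : E → ℝ} (c : ℝ)

theorem fderiv_half_sq_sub_apply (hg : Differentiable ℝ g) (x v : E) :
    fderiv ℝ (fun y => 1 / 2 * (g y - c) ^ 2) x v = (g x - c) * fderiv ℝ g x v := by
  have h := (((hg x).hasFDerivAt.sub_const c).pow 2).const_mul (1 / 2 : ℝ)
  rw [h.fderiv]
  simp only [one_div, Nat.add_one_sub_one, pow_one, nsmul_eq_mul, Nat.cast_ofNat, _root_.smul_apply,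
    smul_eq_mul]
  ring

theorem fderiv_fderiv_half_sq_sub_apply_of_eq (hg : ContDiff ℝ 2 g) {x₀ : E} (hx₀ : g x₀ = c)
    (u v : E) :
    fderiv ℝ (fun x => fderiv ℝ (fun y => 1 / 2 * (g y - c) ^ 2) x v) x₀ u =
      fderiv ℝ g x₀ u * fderiv ℝ g x₀ v := by
  have hg₁ : Differentiable ℝ g := hg.differentiable (by norm_num)
  have hg' : DifferentiableAt ℝ (fun x => fderiv ℝ g x v) x₀ :=
    ((hg.fderiv_right (m := 1) (by norm_num)).differentiable (by norm_num) x₀).clm_apply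
      (differentiableAt_const v)
  simp_rw [fderiv_half_sq_sub_apply c hg₁]
  have h : HasFDerivAt (fun x => (g x - c) * fderiv ℝ g x v) _ x₀ :=
    ((hg₁ x₀).hasFDerivAt.sub_const c).mul hg'.hasFDerivAt
  rw [h.fderiv, hx₀]
  simp [mul_comm]

end HalfSquaredResidual

theorem fderiv_prod_apply_single {𝕜 ι : Type*} [NontriviallyNormedField 𝕜] [Fintype ι]
    [DecidableEq ι] (x : ι → 𝕜) (i : ι) :
    fderiv 𝕜 (fun y : ι → 𝕜 => ∏ k, y k) x (Pi.single i 1) = ∏ k ∈ univ.erase i, x k := by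
  rw [(HasFDerivAt.finsetProd fun k _ => hasFDerivAt_apply k x).fderiv]
  simp [Pi.single_apply]

theorem prod_erase_eq_div_of_ne_zero {ι K : Type*} [Fintype ι] [DecidableEq ι] [Field K]
    {x : ι → K} (hx : ∀ k, x k ≠ 0) (i : ι) : ∏ k ∈ univ.erase i, x k = (∏ k, x k) / x i := by
  rw [eq_div_iff (hx i), mul_comm, mul_prod_erase _ _ (mem_univ i)]

section RankOne

variable {n K : Type*} [Fintype n] [Field K]

theorem vecMulVec_self_mulVec (w v : n → K) : vecMulVec w w *ᵥ v = (w ⬝ᵥ v) • w := by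
  simp [vecMulVec_mulVec]

theorem eq_zero_or_eq_dotProduct_self_of_vecMulVec_self_mulVec_eq_smul {w v : n → K} {μ : K}
    (hv : v ≠ 0) (h : vecMulVec w w *ᵥ v = μ • v) : μ = 0 ∨ μ = w ⬝ᵥ w := by
  rw [vecMulVec_self_mulVec] at h
  by_cases hwv : w ⬝ᵥ v = 0
  · rw [hwv, zero_smul, eq_comm, smul_eq_zero] at h
    exact .inl (h.resolve_right hv)
  · right
    have := congrArg (w ⬝ᵥ ·) h
    simp only [dotProduct_smul, smul_eq_mul] at this
    exact mul_left_cancel₀ hwv (by rw [this, mul_comm])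

end RankOne

theorem le_dotProduct_self_of_vecMulVec_self_mulVec_eq_smul {n : Type*} [Fintype n]
    {w v : n → ℝ} {μ : ℝ} (hv : v ≠ 0) (h : vecMulVec w w *ᵥ v = μ • v) : μ ≤ w ⬝ᵥ w := by
  rcases eq_zero_or_eq_dotProduct_self_of_vecMulVec_self_mulVec_eq_smul hv h with rfl | rfl
  · exact dotProduct_star_self_nonneg w
  · exact le_rfl

theorem hessian_at_global_minimum_general
    (L : ℕ) (σstar : ℝ)
    (σ : Fin L → ℝ) (hmin : ∏ ℓ, σ ℓ = σstar) (hne : ∀ ℓ, σ ℓ ≠ 0)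
    (f : (Fin L → ℝ) → ℝ)
    (hf : ∀ x, f x = (1 / 2) * ((∏ ℓ, x ℓ) - σstar) ^ 2)
    (H : Matrix (Fin L) (Fin L) ℝ)
    (hH : ∀ i j, H i j =
      fderiv ℝ (fun x => fderiv ℝ f x (Pi.single j 1)) σ (Pi.single i 1)) :
    (∀ i j, H i j = σstar ^ 2 / (σ i * σ j)) ∧
    (H.mulVec (fun i => σstar / σ i) =
      (∑ i, σstar ^ 2 / (σ i) ^ 2) • (fun i => σstar / σ i)) ∧
    (∀ (μ : ℝ) (v : Fin L → ℝ), v ≠ 0 → H.mulVec v = μ • v →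
      μ ≤ ∑ i, σstar ^ 2 / (σ i) ^ 2) := by
  obtain rfl : f = _ := funext hf
  set w : Fin L → ℝ := fun i => σstar / σ i
  have hprod : ContDiff ℝ 2 fun x : Fin L → ℝ => ∏ ℓ, x ℓ :=
    contDiff_prod fun ℓ _ => contDiff_apply ℝ ℝ ℓ
  have hH_eq : H = vecMulVec w w := by
    ext i j
    rw [hH, fderiv_fderiv_half_sq_sub_apply_of_eq σstar hprod hmin, fderiv_prod_apply_single,
      fderiv_prod_apply_single, prod_erase_eq_div_of_ne_zero hne, prod_erase_eq_div_of_ne_zero hne,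
      hmin, vecMulVec_apply]
  have hww : w ⬝ᵥ w = ∑ i, σstar ^ 2 / σ i ^ 2 :=
    sum_congr rfl fun i _ => by simp only [w]; ring
  refine ⟨fun i j => ?_, ?_, fun μ v hv h => ?_⟩
  · rw [hH_eq, vecMulVec_apply, div_mul_div_comm, sq]
  · rw [hH_eq, vecMulVec_self_mulVec, hww]
  · rw [← hww]
    exact le_dotProduct_self_of_vecMulVec_self_mulVec_eq_smul hv (hH_eq ▸ h)

/-- At a global minimum of `f(σ) = (1/2)(∏ σ_ℓ − σ_*)²` (i.e. `∏ σ_ℓ = σ_*`)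
with all `σ_ℓ ≠ 0`, the `(i,j)` entry of the Hessian equals `σ_*²/(σ_i σ_j)`,
and the largest eigenvalue of the Hessian equals `∑_i σ_*²/σ_i²`. -/
theorem hessian_at_global_minimum
    (L : ℕ) (hL : 1 ≤ L) (σstar : ℝ) (hσstar : 0 < σstar)
    (σ : Fin L → ℝ) (hmin : ∏ ℓ, σ ℓ = σstar) (hne : ∀ ℓ, σ ℓ ≠ 0)
    (f : (Fin L → ℝ) → ℝ)
    (hf : ∀ x, f x = (1 / 2) * ((∏ ℓ, x ℓ) - σstar) ^ 2)
    (H : Matrix (Fin L) (Fin L) ℝ)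
    (hH : ∀ i j, H i j =
      fderiv ℝ (fun x => fderiv ℝ f x (Pi.single j 1)) σ (Pi.single i 1)) :
    (∀ i j, H i j = σstar ^ 2 / (σ i * σ j)) ∧
    (H.mulVec (fun i => σstar / σ i) =
      (∑ i, σstar ^ 2 / (σ i) ^ 2) • (fun i => σstar / σ i)) ∧
    (∀ (μ : ℝ) (v : Fin L → ℝ), v ≠ 0 → H.mulVec v = μ • v →
      μ ≤ ∑ i, σstar ^ 2 / (σ i) ^ 2) :=
  hessian_at_global_minimum_general L σstar σ hmin hne f hf H hH
end

section
/- Consider one step of gradient descent with learning rate η on L(σ_1,...,σ_L) = (1/2)(π − σ_*)², where π = ∏_ℓ σ_ℓ. For any i, j with σ_i(t), σ_j(t) ≠ 0, the balancing gap satisfies b_{ij}(t+1) = b_{ij}(t)·(1 − η²(π(t) − σ_*)² π(t)²/(σ_i(t)² σ_j(t)²)), where b_{ij}(t) := σ_i(t)² − σ_j(t)². -/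
/-- One-step balancing identity for gradient descent on
`(1/2)(∏ σ_ℓ − σ_*)²`: with update `σ_ℓ' = σ_ℓ − η(π − σ_*)π/σ_ℓ`,
the gap of squares satisfies
`σ_i'² − σ_j'² = (σ_i² − σ_j²)(1 − η²(π − σ_*)²π²/(σ_i²σ_j²))`. -/
theorem gd_balancing_gap_identity
    (L : ℕ) (η σstar : ℝ) (σ σ' : Fin L → ℝ)
    (i j : Fin L) (hi : σ i ≠ 0) (hj : σ j ≠ 0)
    (hupdate : ∀ ℓ, σ' ℓ = σ ℓ - η * ((∏ m, σ m) - σstar) * (∏ m, σ m) / σ ℓ) :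
    (σ' i) ^ 2 - (σ' j) ^ 2 =
      ((σ i) ^ 2 - (σ j) ^ 2) *
        (1 - η ^ 2 * ((∏ m, σ m) - σstar) ^ 2 * (∏ m, σ m) ^ 2 /
          ((σ i) ^ 2 * (σ j) ^ 2)) := by
  rw [hupdate i, hupdate j]
  field_simp
  ring
end

section
/- With the gradient-descent update σ_ℓ(t+1) = σ_ℓ(t) − η(π(t) − σ_*)π(t)/σ_ℓ(t): if for all ℓ the iterate stays positive, i.e., σ_ℓ(t) > 0 and σ_ℓ(t+1) > 0, then for all i, j, 0 ≤ η(π(t) − σ_*)π(t)/σ_ℓ(t)² < 2 implies |σ_i(t+1)² − σ_j(t+1)²| ≤ |σ_i(t)² − σ_j(t)²| whenever η²(π(t) − σ_*)²π(t)²/(σ_i(t)²σ_j(t)²) ≤ 2. -/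
/-- Monotonicity of the balancing gap under one GD step on
`(1/2)(∏ σ_ℓ − σ_*)²`: if the iterates stay positive, the per-layer step ratio
lies in `[0, 2)`, and `η²(π − σ_*)²π²/(σ_i²σ_j²) ≤ 2`, then
`|σ_i'² − σ_j'²| ≤ |σ_i² − σ_j²|`. -/
theorem gd_balancing_gap_nonincreasing
    (L : ℕ) (η σstar : ℝ) (hη : 0 < η) (hσstar : 0 < σstar)
    (σ σ' : Fin L → ℝ)
    (hupdate : ∀ ℓ, σ' ℓ = σ ℓ - η * ((∏ m, σ m) - σstar) * (∏ m, σ m) / σ ℓ)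
    (hpos : ∀ ℓ, 0 < σ ℓ) (hpos' : ∀ ℓ, 0 < σ' ℓ) :
    ∀ i j : Fin L,
      (∀ ℓ, 0 ≤ η * ((∏ m, σ m) - σstar) * (∏ m, σ m) / (σ ℓ) ^ 2 ∧
            η * ((∏ m, σ m) - σstar) * (∏ m, σ m) / (σ ℓ) ^ 2 < 2) →
      η ^ 2 * ((∏ m, σ m) - σstar) ^ 2 * (∏ m, σ m) ^ 2 /
          ((σ i) ^ 2 * (σ j) ^ 2) ≤ 2 →
      |(σ' i) ^ 2 - (σ' j) ^ 2| ≤ |(σ i) ^ 2 - (σ j) ^ 2| := by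
  intro i j _ hq
  set c : ℝ := η * ((∏ m, σ m) - σstar) * (∏ m, σ m) with hc
  set q : ℝ := c ^ 2 / ((σ i) ^ 2 * (σ j) ^ 2) with hqdef
  have hi := (hpos i).ne'
  have hj := (hpos j).ne'
  have hq2 : q ≤ 2 := by
    have : q = η ^ 2 * ((∏ m, σ m) - σstar) ^ 2 * (∏ m, σ m) ^ 2 /
        ((σ i) ^ 2 * (σ j) ^ 2) := by rw [hqdef, hc]; ring_nf
    linarith [this ▸ hq]
  have hq0 : 0 ≤ q := div_nonneg (sq_nonneg c)
    (mul_nonneg (sq_nonneg _) (sq_nonneg _))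
  have key : (σ' i) ^ 2 - (σ' j) ^ 2 = ((σ i) ^ 2 - (σ j) ^ 2) * (1 - q) := by
    rw [hupdate i, hupdate j, hqdef, hc]
    field_simp
    ring
  rw [key, abs_mul]
  have : |1 - q| ≤ 1 := abs_le.2 ⟨by linarith, by linarith⟩
  calc |(σ i) ^ 2 - (σ j) ^ 2| * |1 - q| ≤ |(σ i) ^ 2 - (σ j) ^ 2| * 1 :=
        mul_le_mul_of_nonneg_left this (abs_nonneg _)
    _ = _ := mul_one _
end

section
/- Fix L ≥ 2 and σ_* > 0, η > 0, and define g(ρ) = ρ^L·(1 + z^{2L−1})/(1 + z^{L−1}) − σ_*, where z = z(ρ) := 1 + ηL(σ_* − ρ^L)ρ^{L−2}. Then any ρ > 0 with g(ρ) = 0 and z(ρ) ≠ −1 corresponds to a 2-periodic orbit of the gradient descent map G(σ) = σ + ηL(σ_* − σ^L)σ^{L−1}: namely G(G(ρ)) = ρ. -/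
private lemma pow_eq_neg_one_real {w : ℝ} {n : ℕ} (h : w ^ n = -1) : w = -1 := by
  have hn : n ≠ 0 := by rintro rfl; norm_num at h
  rcases Nat.even_or_odd n with he | ho
  · exfalso; nlinarith [he.pow_nonneg w]
  · have hinj := (Odd.strictMono_pow (R := ℝ) ho).injective
    have h2 : (-1:ℝ)^n = -1 := ho.neg_one_pow
    exact hinj (by simp only []; rw [h, h2])

/-- Roots of the 2-period polynomial give 2-periodic orbits of the GD map
`G(σ) = σ + ηL(σ_* − σ^L)σ^{L−1}` on `(1/2)(σ^L − σ_*)²`. -/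
theorem two_period_polynomial_root_gives_orbit
    (L : ℕ) (hL : 2 ≤ L) (σstar η : ℝ) (hσstar : 0 < σstar)
    (G : ℝ → ℝ)
    (hG : ∀ σ : ℝ, G σ = σ + η * L * (σstar - σ ^ L) * σ ^ (L - 1))
    (z g : ℝ → ℝ)
    (hz : ∀ ρ : ℝ, z ρ = 1 + η * L * (σstar - ρ ^ L) * ρ ^ (L - 2))
    (hg : ∀ ρ : ℝ, g ρ =
      ρ ^ L * (1 + z ρ ^ (2 * L - 1)) / (1 + z ρ ^ (L - 1)) - σstar)
    (ρ : ℝ) (hρ : 0 < ρ) (hroot : g ρ = 0) (hzρ : z ρ ≠ -1) :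
    G (G ρ) = ρ := by
  obtain ⟨n, rfl⟩ : ∃ n, L = n + 2 := ⟨L - 2, by omega⟩
  have e1 : n + 2 - 1 = n + 1 := rfl
  have e2 : n + 2 - 2 = n := rfl
  have e3 : 2 * (n + 2) - 1 = 2 * n + 3 := by omega
  set w := z ρ with hwdef
  have hw : w = 1 + η * (n + 2 : ℕ) * (σstar - ρ ^ (n + 2)) * ρ ^ n := by
    rw [hwdef, hz, e2]
  have hd : (1 : ℝ) + w ^ (n + 1) ≠ 0 := by
    intro h
    have : w ^ (n + 1) = -1 := by linarith
    exact hzρ (pow_eq_neg_one_real this)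
  have key : ρ ^ (n + 2) * (1 + w ^ (2 * n + 3)) = σstar * (1 + w ^ (n + 1)) := by
    have h := hroot
    rw [hg, e1, e3, ← hwdef, sub_eq_zero, div_eq_iff hd] at h
    linarith
  have hGρ : G ρ = ρ * w := by
    rw [hG, hw, e1]; ring
  push_cast at hw
  rw [hGρ, hG, e1]
  push_cast
  linear_combination (-(η * ((n : ℝ) + 2)) * ρ ^ (n + 1)) * key + ρ * hw
end

section
/- Let G(σ) = σ + ηL(σ_* − σ^L)σ^{L−1} be the GD map on f(σ) = (1/2)(σ^L − σ_*)², with L ≥ 2, σ_* > 0. If η = 2/(L σ_*^{2−2/L}) (the critical EOS learning rate) then u(L) := (1 + (1 + 2^{2/L − 1})^{2L−1})/(1 + (1 + 2^{2/L−1})^{L−1}) > 2 for all L ≥ 2. -/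
/-- At the critical EOS learning rate `η = 2/(L σ_*^{2−2/L})`, the quantity
`u(L) = (1 + (1 + 2^{2/L−1})^{2L−1})/(1 + (1 + 2^{2/L−1})^{L−1})`
exceeds `2` for all `L ≥ 2`. -/
theorem u_of_L_gt_two
    (L : ℕ) (hL : 2 ≤ L) (σstar η : ℝ) (hσstar : 0 < σstar)
    (hη : η = 2 / ((L : ℝ) * σstar ^ ((2 : ℝ) - 2 / L))) :
    2 < (1 + (1 + (2 : ℝ) ^ ((2 : ℝ) / L - 1)) ^ (2 * L - 1)) /
        (1 + (1 + (2 : ℝ) ^ ((2 : ℝ) / L - 1)) ^ (L - 1)) := by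
  set z : ℝ := 1 + (2 : ℝ) ^ ((2 : ℝ) / L - 1) with hzdef
  have hL0 : (0 : ℝ) < L := by
    have : (2 : ℝ) ≤ L := by exact_mod_cast hL
    linarith
  have h2L : (2 : ℝ) / L ≤ 1 := by
    rw [div_le_one hL0]
    exact_mod_cast hL
  have hz1 : 1 < z := by
    have h : (0 : ℝ) < (2 : ℝ) ^ ((2 : ℝ) / L - 1) := Real.rpow_pos_of_pos (by norm_num) _
    rw [hzdef]; linarith
  have ht2 : (2 : ℝ) ^ ((2 : ℝ) / L) ≤ 2 := by
    calc (2 : ℝ) ^ ((2 : ℝ) / L) ≤ (2 : ℝ) ^ (1 : ℝ) :=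
          Real.rpow_le_rpow_of_exponent_le one_le_two h2L
      _ = 2 := Real.rpow_one 2
  have hzt : (2 : ℝ) ^ ((2 : ℝ) / L) ≤ z := by
    have hh : (2 : ℝ) ^ ((2 : ℝ) / L - 1) = (2 : ℝ) ^ ((2 : ℝ) / L) / 2 := by
      rw [Real.rpow_sub (by norm_num), Real.rpow_one]
    rw [hzdef, hh]
    linarith
  have hzL : (4 : ℝ) ≤ z ^ L := by
    have h4 : ((2 : ℝ) ^ ((2 : ℝ) / L)) ^ L = 4 := by
      rw [← Real.rpow_natCast ((2 : ℝ) ^ ((2 : ℝ) / L)) L, ← Real.rpow_mul (by norm_num)]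
      rw [div_mul_cancel₀ 2 (ne_of_gt hL0)]
      norm_num
    calc (4 : ℝ) = ((2 : ℝ) ^ ((2 : ℝ) / L)) ^ L := h4.symm
      _ ≤ z ^ L := pow_le_pow_left₀ (le_of_lt (Real.rpow_pos_of_pos (by norm_num) _)) hzt L
  have hzL1 : (1 : ℝ) ≤ z ^ (L - 1) := one_le_pow₀ hz1.le
  have hsplit : z ^ (2 * L - 1) = z ^ (L - 1) * z ^ L := by
    rw [← pow_add]
    congr 1
    omega
  have hD : (0 : ℝ) < 1 + z ^ (L - 1) := by positivity
  rw [lt_div_iff₀ hD]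
  have hprod : 0 ≤ (z ^ (L - 1) - 1) * (z ^ L - 4) :=
    mul_nonneg (by linarith) (by linarith)
  nlinarith [hprod, hzL, hzL1, hsplit]
end

section
/- Under gradient descent on f(Θ) = (1/2)‖W_L⋯W_1 − M_*‖_F² with initialization W_L(0) = 0 and W_ℓ(0) = αI_d for ℓ ∈ [L−1], where M_* = U_* Σ_* V_*^T with Σ_* of rank r: for all t ≥ 1, each weight admits the decomposition W_L(t) = U_* diag(Σ̃_L(t), 0) V_*^T and W_ℓ(t) = V_* diag(Σ̃(t), αI_{d−r}) V_*^T for ℓ ∈ [L−1], where Σ̃_L(t), Σ̃(t) ∈ ℝ^{r×r} are diagonal matrices evolving by Σ̃_L(t+1) = Σ̃_L(t) − η(Σ̃_L(t)Σ̃(t)^{L−1} − Σ_{*,r})Σ̃(t)^{L−1} and Σ̃(t+1) = Σ̃(t)(I − ηΣ̃_L(t)(Σ̃_L(t)Σ̃(t)^{L−1} − Σ_{*,r})Σ̃(t)^{L−3}), with Σ̃_L(1) = ηα^{L−1}Σ_{*,r}, Σ̃(1) = αI_r. -/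
open Matrix

/-- The gradient of `f(Θ) = (1/2)‖W_L⋯W_1 − M_*‖_F²` with respect to the
`ℓ`-th layer (layers indexed `0,…,L−1`, with layer `ℓ : Fin L` standing for
`W_{ℓ+1}`): `∇_{W_ℓ} f = W_{L:ℓ+1}ᵀ (W_{L:1} − M_*) W_{ℓ−1:1}ᵀ`. -/
noncomputable def dmfGrad {m : Type*} [Fintype m] [DecidableEq m] {L : ℕ}
    (Mstar : Matrix m m ℝ) (W : Fin L → Matrix m m ℝ) (ℓ : Fin L) :
    Matrix m m ℝ :=
  (((List.ofFn W).drop (ℓ.val + 1)).reverse.prod)ᵀ *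
    ((List.ofFn W).reverse.prod - Mstar) *
    (((List.ofFn W).take ℓ.val).reverse.prod)ᵀ

section Aux
variable {n : Type*} [Fintype n] [DecidableEq n]

lemma isDiag_transpose_eq {A : Matrix n n ℝ} (h : A.IsDiag) : Aᵀ = A := by
  ext i j
  by_cases hij : i = j
  · subst hij; rfl
  · rw [Matrix.transpose_apply, h hij, h (Ne.symm hij)]

lemma isDiag_mul {A B : Matrix n n ℝ} (hA : A.IsDiag) (hB : B.IsDiag) :
    (A * B).IsDiag := by
  rw [← hA.diagonal_diag, ← hB.diagonal_diag, Matrix.diagonal_mul_diagonal]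
  exact Matrix.isDiag_diagonal _

lemma isDiag_commute {A B : Matrix n n ℝ} (hA : A.IsDiag) (hB : B.IsDiag) :
    A * B = B * A := by
  rw [← hA.diagonal_diag, ← hB.diagonal_diag, Matrix.diagonal_mul_diagonal,
    Matrix.diagonal_mul_diagonal]
  simp [mul_comm]

lemma isDiag_pow {A : Matrix n n ℝ} (hA : A.IsDiag) (k : ℕ) : (A ^ k).IsDiag := by
  induction k with
  | zero => simpa using Matrix.isDiag_one
  | succ k ih => rw [pow_succ]; exact isDiag_mul ih hA

lemma fromBlocks_pow {p q : Type*} [Fintype p] [DecidableEq p] [Fintype q] [DecidableEq q]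
    (A : Matrix p p ℝ) (D : Matrix q q ℝ) (k : ℕ) :
    (fromBlocks A 0 0 D) ^ k = fromBlocks (A ^ k) 0 0 (D ^ k) := by
  induction k with
  | zero => simp [Matrix.fromBlocks_one]
  | succ k ih => rw [pow_succ, pow_succ, pow_succ, ih, Matrix.fromBlocks_multiply]; simp

lemma fromBlocks_sub {p q : Type*}
    (A A' : Matrix p p ℝ) (B B' : Matrix p q ℝ) (C C' : Matrix q p ℝ) (D D' : Matrix q q ℝ) :
    fromBlocks A B C D - fromBlocks A' B' C' D' =
      fromBlocks (A - A') (B - B') (C - C') (D - D') := by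
  rw [sub_eq_add_neg, Matrix.fromBlocks_neg, Matrix.fromBlocks_add]
  simp [sub_eq_add_neg]

lemma conj_pow' (V B : Matrix n n ℝ) (hV1 : V * Vᵀ = 1) (hV2 : Vᵀ * V = 1) (k : ℕ) :
    (V * B * Vᵀ) ^ k = V * B ^ k * Vᵀ := by
  induction k with
  | zero => simp [hV1]
  | succ k ih =>
    rw [pow_succ, pow_succ, ih]
    calc V * B ^ k * Vᵀ * (V * B * Vᵀ) = V * B ^ k * (Vᵀ * V) * B * Vᵀ := by
          noncomm_ring
      _ = V * (B ^ k * B) * Vᵀ := by rw [hV2]; noncomm_ring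

lemma ofFn_eq_replicate {M : Type*} {L : ℕ} (hL : 1 ≤ L) (W : Fin L → M) (P Q : M)
    (h1 : ∀ ℓ : Fin L, ℓ.val < L - 1 → W ℓ = P) (h2 : W ⟨L - 1, by omega⟩ = Q) :
    List.ofFn W = List.replicate (L - 1) P ++ [Q] := by
  apply List.ext_getElem
  · simp; omega
  · intro i hi1 hi2
    simp only [List.getElem_ofFn]
    rcases lt_or_ge i (L - 1) with h | h
    · rw [List.getElem_append_left (by simpa using h), List.getElem_replicate]
      exact h1 _ (by simpa using h)
    · have hiL : i = L - 1 := by simp at hi1; omega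
      subst hiL
      rw [List.getElem_append_right (by simp)]
      simp only [List.length_replicate]
      rw [List.getElem_singleton]
      exact h2

lemma dmfGrad_last {m : Type*} [Fintype m] [DecidableEq m] {L : ℕ} (hL : 1 ≤ L)
    (Mstar : Matrix m m ℝ) (W : Fin L → Matrix m m ℝ) (P Q : Matrix m m ℝ)
    (h1 : ∀ ℓ : Fin L, ℓ.val < L - 1 → W ℓ = P) (h2 : W ⟨L - 1, by omega⟩ = Q) :
    dmfGrad Mstar W ⟨L - 1, by omega⟩ = (Q * P ^ (L - 1) - Mstar) * (P ^ (L - 1))ᵀ := by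
  have hofn := ofFn_eq_replicate hL W P Q h1 h2
  unfold dmfGrad
  rw [hofn]
  have hdrop : (List.replicate (L - 1) P ++ [Q]).drop ((L : ℕ) - 1 + 1) = [] := by
    apply List.drop_eq_nil_of_le; simp
  have htake : (List.replicate (L - 1) P ++ [Q]).take (L - 1) = List.replicate (L - 1) P := by
    rw [List.take_append_of_le_length (by simp)]
    simp
  simp only [hdrop, htake]
  rw [List.reverse_append, List.reverse_replicate]
  simp [List.prod_replicate, Matrix.mul_assoc]

lemma dmfGrad_mid {m : Type*} [Fintype m] [DecidableEq m] {L : ℕ} (hL : 1 ≤ L)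
    (Mstar : Matrix m m ℝ) (W : Fin L → Matrix m m ℝ) (P Q : Matrix m m ℝ)
    (h1 : ∀ ℓ : Fin L, ℓ.val < L - 1 → W ℓ = P)
    (h2 : W ⟨L - 1, by omega⟩ = Q) (ℓ : Fin L) (hk : ℓ.val < L - 1) :
    dmfGrad Mstar W ℓ =
      (Q * P ^ (L - 2 - ℓ.val))ᵀ * (Q * P ^ (L - 1) - Mstar) * (P ^ ℓ.val)ᵀ := by
  have hofn := ofFn_eq_replicate hL W P Q h1 h2
  unfold dmfGrad
  rw [hofn]
  have hdrop : (List.replicate (L - 1) P ++ [Q]).drop (ℓ.val + 1) =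
      List.replicate (L - 2 - ℓ.val) P ++ [Q] := by
    rw [List.drop_append_of_le_length (by simp; omega)]
    rw [List.drop_replicate]
    congr 2
    omega
  have htake : (List.replicate (L - 1) P ++ [Q]).take ℓ.val = List.replicate ℓ.val P := by
    rw [List.take_append_of_le_length (by simp; omega)]
    rw [List.take_replicate]
    congr 1
    omega
  rw [hdrop, htake]
  rw [List.reverse_append, List.reverse_replicate, List.reverse_append, List.reverse_replicate]
  simp [List.prod_replicate, Matrix.mul_assoc]

lemma cancel_mid {A : Matrix n n ℝ} (h : Aᵀ * A = 1)
    (X Y : Matrix n n ℝ) : X * Aᵀ * (A * Y) = X * Y := by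
  calc X * Aᵀ * (A * Y) = X * (Aᵀ * A) * Y := by noncomm_ring
    _ = X * Y := by rw [h]; noncomm_ring

lemma diag_rearrange {S X : Matrix n n ℝ} (hS : S.IsDiag) (hX : X.IsDiag)
    (a k c : ℕ) (h : a + k = c + 1) :
    S ^ a * X * S ^ k = S * (X * S ^ c) := by
  have h1 : S ^ a * X * S ^ k = X * S ^ (a + k) := by
    rw [isDiag_commute (isDiag_pow hS a) hX, Matrix.mul_assoc, ← pow_add]
  have h2 : S * (X * S ^ c) = X * S ^ (c + 1) := by
    rw [← Matrix.mul_assoc, isDiag_commute hS hX, Matrix.mul_assoc, ← pow_succ']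
  rw [h1, h2, h]

lemma factor_sub {U V X Y : Matrix n n ℝ} (η : ℝ) :
    U * X * Vᵀ - η • (U * Y * Vᵀ) = U * (X - η • Y) * Vᵀ := by
  rw [Matrix.mul_sub, Matrix.sub_mul, Matrix.mul_smul, Matrix.smul_mul]

lemma step_factor {S X : Matrix n n ℝ} (hS : S.IsDiag) (hX : X.IsDiag) (η : ℝ)
    (a k c : ℕ) (h : a + k = c + 1) :
    S - η • (S ^ a * X * S ^ k) = S * (1 - η • (X * S ^ c)) := by
  rw [Matrix.mul_sub, Matrix.mul_one, Matrix.mul_smul, diag_rearrange hS hX a k c h]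

end Aux

noncomputable def dmfDyn (r : ℕ) (η α : ℝ) (L : ℕ) (Sr : Matrix (Fin r) (Fin r) ℝ) :
    ℕ → Matrix (Fin r) (Fin r) ℝ × Matrix (Fin r) (Fin r) ℝ
  | 0 => ((η * α ^ (L - 1)) • Sr, α • (1 : Matrix (Fin r) (Fin r) ℝ))
  | (t + 1) =>
      let p := dmfDyn r η α L Sr t
      (p.1 - η • ((p.1 * p.2 ^ (L - 1) - Sr) * p.2 ^ (L - 1)),
       p.2 * (1 - η • (p.1 * (p.1 * p.2 ^ (L - 1) - Sr) * p.2 ^ (L - 3))))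

/-- Under GD on the deep matrix factorization loss from the unbalanced
initialization `W_L(0) = 0`, `W_ℓ(0) = αI` (`ℓ < L`), every iterate `t ≥ 1`
admits the decomposition `W_L(t) = U_* diag(Σ̃_L(t),0) V_*ᵀ`,
`W_ℓ(t) = V_* diag(Σ̃(t), αI) V_*ᵀ`, with diagonal `r×r` factors evolving by
the stated recursions and initialized as `Σ̃_L(1) = ηα^{L−1}Σ_{*,r}`,
`Σ̃(1) = αI`. -/
theorem unbalanced_init_singular_vector_stationarity
    (r s L : ℕ) (hL : 3 ≤ L) (η α : ℝ) (hη : 0 < η) (hα : 0 < α)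
    (U V : Matrix (Fin r ⊕ Fin s) (Fin r ⊕ Fin s) ℝ)
    (hU : U * Uᵀ = 1 ∧ Uᵀ * U = 1) (hV : V * Vᵀ = 1 ∧ Vᵀ * V = 1)
    (Sr : Matrix (Fin r) (Fin r) ℝ) (hSdiag : Sr.IsDiag)
    (hSpos : ∀ i, 0 < Sr i i)
    (Mstar : Matrix (Fin r ⊕ Fin s) (Fin r ⊕ Fin s) ℝ)
    (hM : Mstar = U * fromBlocks Sr 0 0 0 * Vᵀ)
    (W : ℕ → Fin L → Matrix (Fin r ⊕ Fin s) (Fin r ⊕ Fin s) ℝ)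
    (hinitL : W 0 ⟨L - 1, by omega⟩ = 0)
    (hinit : ∀ ℓ : Fin L, ℓ.val < L - 1 → W 0 ℓ = α • (1 : Matrix _ _ ℝ))
    (hstep : ∀ t ℓ, W (t + 1) ℓ = W t ℓ - η • dmfGrad Mstar (W t) ℓ) :
    ∃ SL S : ℕ → Matrix (Fin r) (Fin r) ℝ,
      (∀ t, (SL t).IsDiag ∧ (S t).IsDiag) ∧
      SL 1 = (η * α ^ (L - 1)) • Sr ∧
      S 1 = α • (1 : Matrix (Fin r) (Fin r) ℝ) ∧
      (∀ t, 1 ≤ t →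
        SL (t + 1) = SL t - η • ((SL t * S t ^ (L - 1) - Sr) * S t ^ (L - 1))) ∧
      (∀ t, 1 ≤ t →
        S (t + 1) = S t *
          (1 - η • (SL t * (SL t * S t ^ (L - 1) - Sr) * S t ^ (L - 3)))) ∧
      (∀ t, 1 ≤ t →
        W t ⟨L - 1, by omega⟩ = U * fromBlocks (SL t) 0 0 0 * Vᵀ ∧
        ∀ ℓ : Fin L, ℓ.val < L - 1 →
          W t ℓ = V * fromBlocks (S t) 0 0 (α • (1 : Matrix (Fin s) (Fin s) ℝ)) * Vᵀ) := by
  obtain ⟨hU1, hU2⟩ := hU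
  obtain ⟨hV1, hV2⟩ := hV
  have hL1 : 1 ≤ L := by omega
  set F := dmfDyn r η α L Sr with hF
  have hF0 : F 0 = ((η * α ^ (L - 1)) • Sr, α • (1 : Matrix (Fin r) (Fin r) ℝ)) := rfl
  have hFs : ∀ t, F (t + 1) =
      ((F t).1 - η • (((F t).1 * (F t).2 ^ (L - 1) - Sr) * (F t).2 ^ (L - 1)),
       (F t).2 * (1 - η • ((F t).1 * ((F t).1 * (F t).2 ^ (L - 1) - Sr) * (F t).2 ^ (L - 3)))) :=
    fun t => rfl
  have hdiag : ∀ t, (F t).1.IsDiag ∧ (F t).2.IsDiag := by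
    intro t
    induction t with
    | zero => exact ⟨hSdiag.smul _, Matrix.isDiag_one.smul _⟩
    | succ t ih =>
      obtain ⟨h1, h2⟩ := ih
      have hX : ((F t).1 * (F t).2 ^ (L - 1) - Sr).IsDiag :=
        (isDiag_mul h1 (isDiag_pow h2 _)).sub hSdiag
      rw [hFs t]
      exact ⟨h1.sub ((isDiag_mul hX (isDiag_pow h2 _)).smul _),
        isDiag_mul h2 (Matrix.isDiag_one.sub
          ((isDiag_mul (isDiag_mul h1 hX) (isDiag_pow h2 _)).smul _))⟩
  have hsm : ∀ (c : ℝ) (Xr : Matrix (Fin r) (Fin r) ℝ),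
      fromBlocks (c • Xr) (0 : Matrix (Fin r) (Fin s) ℝ) (0 : Matrix (Fin s) (Fin r) ℝ)
        (0 : Matrix (Fin s) (Fin s) ℝ) = c • fromBlocks Xr 0 0 0 := by
    intro c Xr
    rw [Matrix.fromBlocks_smul]
    simp
  have hone : fromBlocks (α • (1 : Matrix (Fin r) (Fin r) ℝ)) 0 0
      (α • (1 : Matrix (Fin s) (Fin s) ℝ)) = α • (1 : Matrix (Fin r ⊕ Fin s) (Fin r ⊕ Fin s) ℝ) := by
    rw [show (α : ℝ) • (1 : Matrix (Fin r ⊕ Fin s) (Fin r ⊕ Fin s) ℝ)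
        = α • fromBlocks 1 0 0 1 from by rw [Matrix.fromBlocks_one], Matrix.fromBlocks_smul]
    simp
  have key : ∀ t : ℕ,
      W (t + 1) ⟨L - 1, by omega⟩ = U * fromBlocks (F t).1 0 0 0 * Vᵀ ∧
      ∀ ℓ : Fin L, ℓ.val < L - 1 →
        W (t + 1) ℓ = V * fromBlocks (F t).2 0 0 (α • (1 : Matrix (Fin s) (Fin s) ℝ)) * Vᵀ := by
    intro t
    induction t with
    | zero =>
      have hGlast := dmfGrad_last hL1 Mstar (W 0) (α • 1) 0 hinit hinitL
      have hGmid := fun (ℓ : Fin L) (hk : ℓ.val < L - 1) =>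
        dmfGrad_mid hL1 Mstar (W 0) (α • 1) 0 hinit hinitL ℓ hk
      constructor
      · rw [hstep 0 _, hinitL, hGlast, hF0]
        simp only [smul_pow, one_pow, Matrix.zero_mul, zero_sub, Matrix.transpose_smul,
          Matrix.transpose_one, Matrix.neg_mul, Matrix.mul_smul, Matrix.mul_one, smul_neg,
          smul_smul, sub_neg_eq_add, zero_add]
        rw [hM, hsm, Matrix.mul_smul, Matrix.smul_mul]
        simp
      · intro ℓ hk
        rw [hstep 0 ℓ, hinit ℓ hk, hGmid ℓ hk, hF0]
        simp only [Matrix.zero_mul, Matrix.transpose_zero, smul_zero, sub_zero]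
        rw [hone, Matrix.mul_smul, Matrix.mul_one, Matrix.smul_mul, hV1]
    | succ t ih =>
      obtain ⟨hQ, hP⟩ := ih
      obtain ⟨hSL, hS⟩ := hdiag t
      have hAt : (fromBlocks (F t).1 (0 : Matrix (Fin r) (Fin s) ℝ)
          (0 : Matrix (Fin s) (Fin r) ℝ) (0 : Matrix (Fin s) (Fin s) ℝ))ᵀ
          = fromBlocks (F t).1 0 0 0 := by
        rw [Matrix.fromBlocks_transpose, isDiag_transpose_eq hSL]
        simp
      have hBt : (fromBlocks (F t).2 (0 : Matrix (Fin r) (Fin s) ℝ)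
          (0 : Matrix (Fin s) (Fin r) ℝ) (α • (1 : Matrix (Fin s) (Fin s) ℝ)))ᵀ
          = fromBlocks (F t).2 0 0 (α • 1) := by
        rw [Matrix.fromBlocks_transpose, isDiag_transpose_eq hS]
        simp
      set A := fromBlocks (F t).1 (0 : Matrix (Fin r) (Fin s) ℝ)
        (0 : Matrix (Fin s) (Fin r) ℝ) (0 : Matrix (Fin s) (Fin s) ℝ) with hA
      set B := fromBlocks (F t).2 (0 : Matrix (Fin r) (Fin s) ℝ)
        (0 : Matrix (Fin s) (Fin r) ℝ) (α • (1 : Matrix (Fin s) (Fin s) ℝ)) with hB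
      have hPk : ∀ k, (V * B * Vᵀ) ^ k = V * B ^ k * Vᵀ := conj_pow' V B hV1 hV2
      have hPkT : ∀ k, ((V * B * Vᵀ) ^ k)ᵀ = V * B ^ k * Vᵀ := by
        intro k
        rw [hPk, Matrix.transpose_mul, Matrix.transpose_mul, Matrix.transpose_transpose,
          Matrix.transpose_pow, hBt]
        noncomm_ring
      have hmid : ∀ j, U * A * Vᵀ * (V * B * Vᵀ) ^ j = U * (A * B ^ j) * Vᵀ := by
        intro j
        rw [hPk]
        calc U * A * Vᵀ * (V * B ^ j * Vᵀ) = U * A * (Vᵀ * V) * (B ^ j * Vᵀ) := by noncomm_ring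
          _ = U * (A * B ^ j) * Vᵀ := by rw [hV2]; noncomm_ring
      have hMed : U * A * Vᵀ * (V * B * Vᵀ) ^ (L - 1) - Mstar
          = U * (A * B ^ (L - 1) - fromBlocks Sr 0 0 0) * Vᵀ := by
        rw [hmid, hM, ← Matrix.sub_mul, ← Matrix.mul_sub]
      have hGlast := dmfGrad_last hL1 Mstar (W (t + 1)) (V * B * Vᵀ) (U * A * Vᵀ) hP hQ
      constructor
      · rw [hstep (t + 1) _, hQ, hGlast, hMed, hPkT]
        have hc : U * (A * B ^ (L - 1) - fromBlocks Sr 0 0 0) * Vᵀ * (V * B ^ (L - 1) * Vᵀ)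
            = U * ((A * B ^ (L - 1) - fromBlocks Sr 0 0 0) * B ^ (L - 1)) * Vᵀ := by
          calc U * (A * B ^ (L - 1) - fromBlocks Sr 0 0 0) * Vᵀ * (V * B ^ (L - 1) * Vᵀ)
              = U * (A * B ^ (L - 1) - fromBlocks Sr 0 0 0) * (Vᵀ * V) * (B ^ (L - 1) * Vᵀ) := by
                noncomm_ring
            _ = _ := by rw [hV2]; noncomm_ring
        rw [hc]
        rw [factor_sub η, hFs t]
        congr 2
        rw [hA, hB]
        simp [fromBlocks_pow, Matrix.fromBlocks_multiply, fromBlocks_sub, Matrix.fromBlocks_smul,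
          Matrix.mul_assoc]
      · intro ℓ hk
        have hGm := dmfGrad_mid hL1 Mstar (W (t + 1)) (V * B * Vᵀ) (U * A * Vᵀ) hP hQ ℓ hk
        rw [hstep (t + 1) ℓ, hP ℓ hk, hGm]
        have h1 : (U * A * Vᵀ * (V * B * Vᵀ) ^ (L - 2 - ℓ.val))ᵀ
            = V * (B ^ (L - 2 - ℓ.val) * A) * Uᵀ := by
          rw [hmid, Matrix.transpose_mul, Matrix.transpose_mul, Matrix.transpose_transpose,
            Matrix.transpose_mul, Matrix.transpose_pow, hAt, hBt]
          noncomm_ring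
        have hgrad : V * (B ^ (L - 2 - ℓ.val) * A) * Uᵀ
              * (U * (A * B ^ (L - 1) - fromBlocks Sr 0 0 0) * Vᵀ) * (V * B ^ ℓ.val * Vᵀ)
            = V * (B ^ (L - 2 - ℓ.val) * A * (A * B ^ (L - 1) - fromBlocks Sr 0 0 0) * B ^ ℓ.val)
              * Vᵀ := by
          calc V * (B ^ (L - 2 - ℓ.val) * A) * Uᵀ
                * (U * (A * B ^ (L - 1) - fromBlocks Sr 0 0 0) * Vᵀ) * (V * B ^ ℓ.val * Vᵀ)
              = V * (B ^ (L - 2 - ℓ.val) * A) * (Uᵀ * U)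
                * (A * B ^ (L - 1) - fromBlocks Sr 0 0 0) * (Vᵀ * V) * B ^ ℓ.val * Vᵀ := by
                noncomm_ring
            _ = _ := by rw [hU2, hV2]; noncomm_ring
        rw [h1, hMed, hPkT, hgrad]
        rw [factor_sub η, hFs t]
        congr 2
        have hXd : ((F t).1 * ((F t).1 * (F t).2 ^ (L - 1) - Sr)).IsDiag :=
          isDiag_mul hSL ((isDiag_mul hSL (isDiag_pow hS _)).sub hSdiag)
        have htop := step_factor hS hXd η (L - 2 - ℓ.val) ℓ.val (L - 3) (by omega)
        rw [← htop, hA, hB]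
        simp [fromBlocks_pow, Matrix.fromBlocks_multiply, fromBlocks_sub, Matrix.fromBlocks_smul,
          Matrix.mul_assoc]
  refine ⟨fun t => (F (t - 1)).1, fun t => (F (t - 1)).2, fun t => hdiag (t - 1), ?_, ?_, ?_, ?_, ?_⟩
  · show (F 0).1 = (η * α ^ (L - 1)) • Sr
    rw [hF0]
  · show (F 0).2 = α • (1 : Matrix (Fin r) (Fin r) ℝ)
    rw [hF0]
  · intro t ht
    obtain ⟨u, rfl⟩ : ∃ u, t = u + 1 := ⟨t - 1, by omega⟩
    simp only [Nat.add_sub_cancel]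
    rw [hFs u]
  · intro t ht
    obtain ⟨u, rfl⟩ : ∃ u, t = u + 1 := ⟨t - 1, by omega⟩
    simp only [Nat.add_sub_cancel]
    rw [hFs u]
  · intro t ht
    obtain ⟨u, rfl⟩ : ∃ u, t = u + 1 := ⟨t - 1, by omega⟩
    simp only [Nat.add_sub_cancel]
    exact key u
end
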